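/- arXiv:0804.0526 — 2 statements merged into one kernel-verified Lean document; each statement's English description precedes it below -/
import Mathlib

section
/- Let X = ℤ∖{0}. The partial translation operator s₁ on ℓ²(X) satisfies s₁s₁* = 1 − p₁, where p₁ is the rank-one orthogonal projection onto the span of δ₁, and the C*-subalgebra of B(ℓ²(X)) generated by the family {sₙ : n ∈ ℤ} contains every compact operator on ℓ²(X). -/
/-!
The adjoint of `sₙ` is `s₋ₙ`, so `s₁ s₁*` fixes every `δₓ` except `δ₁`, which it kills. Hence the
projection `p₁ = 1 - s₁ s₁*` lies in the algebra generated by the `sₙ`, and with it every matrix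
unit `|δₓ⟩⟨δ_y| = s_{x-1} p₁ s_{1-y}`. If `P_F` is the projection onto the span of `δₓ`, `x ∈ F`,
then `P_F → 1` strongly with `‖P_F‖ ≤ 1`, so the convergence is uniform on the relatively compact
image of the unit ball under a compact `K`, i.e. `P_F K → K` in norm. Finally
`P_F K = ∑_{x ∈ F} |δₓ⟩⟨K* δₓ|`, and each `|δₓ⟩⟨v|` is a limit of combinations of matrix units.
-/

/- ℓ²(X) for X = ℤ∖{0}, with its standard orthonormal basis (δₓ)_{x∈X}. -/
noncomputable section

abbrev Xzd : Set ℤ := {x : ℤ | x ≠ 0}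

abbrev l2X : Type := lp (fun _ : Xzd => ℂ) 2

/-- The standard basis vector δₓ of ℓ²(X). -/
def δ (x : Xzd) : l2X := lp.single 2 x 1

open Filter Topology InnerProductSpace ContinuousLinearMap

theorem IsCompactOperator.tendsto_comp_of_tendsto_apply {α 𝕜 E F G : Type*} [RCLike 𝕜]
    [NormedAddCommGroup E] [NormedSpace 𝕜 E] [NormedAddCommGroup F] [NormedSpace 𝕜 F]
    [NormedAddCommGroup G] [NormedSpace 𝕜 G] {l : Filter α}
    {T : α → E →L[𝕜] F} {C : ℝ} (hC : ∀ a, ‖T a‖ ≤ C)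
    (hT : ∀ x, Tendsto (fun a => T a x) l (𝓝 0)) {K : G →L[𝕜] E} (hK : IsCompactOperator K) :
    Tendsto (fun a => T a ∘L K) l (𝓝 0) := by
  refine Metric.tendsto_nhds.2 fun ε hε => ?_
  obtain ⟨r, hr, hCr⟩ := exists_pos_mul_lt (show 0 < ε / 4 by positivity) C
  obtain ⟨t, -, ht, hcover⟩ := (hK.isCompact_closure_image_closedBall 1).finite_cover_balls hr
  have hsmall : ∀ᶠ a in l, ∀ y ∈ t, ‖T a y‖ < ε / 4 :=
    (eventually_all_finite ht).2 fun y _ => by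
      simpa using Metric.tendsto_nhds.1 (hT y) (ε / 4) (by positivity)
  filter_upwards [hsmall] with a ha
  suffices ‖T a ∘L K‖ ≤ ε / 2 by rw [dist_zero_right]; linarith
  refine opNorm_le_of_unit_norm (by positivity) fun w hw => ?_
  obtain ⟨y, hy, hwy⟩ := Set.mem_iUnion₂.1 <| hcover (subset_closure ⟨w, by simp [hw], rfl⟩)
  rw [Metric.mem_ball, dist_eq_norm] at hwy
  calc ‖T a (K w)‖ = ‖T a (K w - y) + T a y‖ := by rw [← map_add, sub_add_cancel]
    _ ≤ C * r + ε / 4 := by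
      refine norm_add_le_of_le ((le_opNorm _ _).trans ?_) (ha y hy).le
      exact mul_le_mul (hC a) hwy.le (norm_nonneg _) ((norm_nonneg _).trans (hC a))
    _ ≤ ε / 2 := by linarith

namespace HilbertBasis

variable {ι 𝕜 E : Type*} [RCLike 𝕜] [NormedAddCommGroup E] [InnerProductSpace 𝕜 E]
  (b : HilbertBasis ι 𝕜 E)

theorem ext_of_inner {x y : E} (h : ∀ i, ⟪b i, x⟫_𝕜 = ⟪b i, y⟫_𝕜) : x = y :=
  b.repr.injective <| lp.ext <| funext fun i => by simpa only [b.repr_apply_apply] using h i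

theorem continuousLinearMap_ext {T U : E →L[𝕜] E} (h : ∀ i, T (b i) = U (b i)) : T = U :=
  ContinuousLinearMap.ext_on (Submodule.dense_iff_topologicalClosure_eq_top.2 b.dense_span)
    (by rintro _ ⟨i, rfl⟩; exact h i)

theorem eq_adjoint_of_inner [CompleteSpace E] {A B : E →L[𝕜] E}
    (h : ∀ i j, ⟪b j, A (b i)⟫_𝕜 = ⟪B (b j), b i⟫_𝕜) : A = adjoint B :=
  b.continuousLinearMap_ext fun i => b.ext_of_inner fun j => by
    rw [adjoint_inner_right, h]

def partialProj (s : Finset ι) : E →L[𝕜] E := ∑ i ∈ s, rankOne 𝕜 (b i) (b i)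

theorem partialProj_apply (s : Finset ι) (x : E) :
    b.partialProj s x = ∑ i ∈ s, ⟪b i, x⟫_𝕜 • b i := by
  simp [partialProj]

theorem tendsto_partialProj_apply (x : E) :
    Tendsto (fun s => b.partialProj s x) atTop (𝓝 x) := by
  have h : Tendsto (fun s => ∑ i ∈ s, b.repr x i • b i) atTop (𝓝 x) := b.hasSum_repr x
  simpa only [partialProj_apply, b.repr_apply_apply] using h

theorem norm_partialProj_apply_le (s : Finset ι) (x : E) : ‖b.partialProj s x‖ ≤ ‖x‖ := by
  have hsq : ‖b.partialProj s x‖ ^ 2 = ∑ i ∈ s, ‖⟪b i, x⟫_𝕜‖ ^ 2 := by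
    have h : ((‖b.partialProj s x‖ : 𝕜)) ^ 2 = ∑ i ∈ s, ((‖⟪b i, x⟫_𝕜‖ : 𝕜)) ^ 2 := by
      simp only [← inner_self_eq_norm_sq_to_K, partialProj_apply, b.orthonormal.inner_sum,
        RCLike.conj_mul]
    exact_mod_cast h
  exact (sq_le_sq₀ (norm_nonneg _) (norm_nonneg _)).1 (hsq ▸ b.orthonormal.sum_inner_products_le x)

theorem norm_partialProj_le (s : Finset ι) : ‖b.partialProj s‖ ≤ 1 :=
  opNorm_le_bound _ zero_le_one fun x => (one_mul ‖x‖).symm ▸ b.norm_partialProj_apply_le s x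

theorem partialProj_comp [CompleteSpace E] (s : Finset ι) (K : E →L[𝕜] E) :
    b.partialProj s ∘L K = ∑ i ∈ s, rankOne 𝕜 (b i) (adjoint K (b i)) := by
  ext x
  simp [partialProj, adjoint_inner_left]

theorem tendsto_partialProj_comp {G : Type*} [NormedAddCommGroup G] [NormedSpace 𝕜 G]
    {K : G →L[𝕜] E} (hK : IsCompactOperator K) :
    Tendsto (fun s => b.partialProj s ∘L K) atTop (𝓝 K) := by
  have hbound (s : Finset ι) : ‖b.partialProj s - .id 𝕜 E‖ ≤ 2 := by
    have h1 := b.norm_partialProj_le s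
    have h2 : ‖ContinuousLinearMap.id 𝕜 E‖ ≤ 1 := norm_id_le
    exact (norm_sub_le _ _).trans (by linarith)
  have hdiff := hK.tendsto_comp_of_tendsto_apply hbound
    fun x => tendsto_sub_nhds_zero_iff.2 (b.tendsto_partialProj_apply x)
  simp only [sub_comp, id_comp] at hdiff
  exact tendsto_sub_nhds_zero_iff.1 hdiff

theorem rankOne_mem_of_mem {M : Submodule 𝕜 (E →L[𝕜] E)} (hM : IsClosed (M : Set (E →L[𝕜] E)))
    (hb : ∀ i j, rankOne 𝕜 (b i) (b j) ∈ M) (i : ι) (v : E) : rankOne 𝕜 (b i) v ∈ M := by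
  let N : Submodule 𝕜 E := M.comap (rankOne 𝕜 (b i)).toLinearMap
  have hN : IsClosed (N : Set E) := hM.preimage (rankOne 𝕜 (b i)).continuous
  have hspan : Submodule.span 𝕜 (Set.range b) ≤ N :=
    Submodule.span_le.2 (Set.range_subset_iff.2 (hb i))
  have htop : ⊤ ≤ N := b.dense_span ▸ Submodule.topologicalClosure_minimal _ hspan hN
  exact htop Submodule.mem_top

theorem mem_of_isCompactOperator [CompleteSpace E] {M : Submodule 𝕜 (E →L[𝕜] E)}
    (hM : IsClosed (M : Set (E →L[𝕜] E))) (hb : ∀ i j, rankOne 𝕜 (b i) (b j) ∈ M)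
    {K : E →L[𝕜] E} (hK : IsCompactOperator K) : K ∈ M :=
  hM.mem_of_tendsto (b.tendsto_partialProj_comp hK) <| Eventually.of_forall fun s =>
    b.partialProj_comp s K ▸ sum_mem fun i _ => b.rankOne_mem_of_mem hM hb i _

end HilbertBasis

def deltaInt (k : ℤ) : l2X := if h : k ∈ Xzd then δ ⟨k, h⟩ else 0

lemma deltaInt_coe (x : Xzd) : deltaInt x = δ x := dif_pos x.2

lemma deltaInt_zero : deltaInt 0 = 0 := dif_neg fun h => h rfl

lemma deltaInt_apply (k : ℤ) (y : Xzd) : deltaInt k y = if (y : ℤ) = k then 1 else 0 := by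
  by_cases hk : k ∈ Xzd
  · simp [deltaInt, hk, δ, lp.single_apply, Pi.single_apply, Subtype.ext_iff]
  · have : (y : ℤ) ≠ k := fun h => hk (h ▸ y.2)
    simp [deltaInt, hk, this]

def deltaBasis : HilbertBasis Xzd ℂ l2X := .ofRepr (LinearIsometryEquiv.refl ℂ l2X)

lemma deltaBasis_apply (x : Xzd) : deltaBasis x = δ x := (deltaBasis.repr_symm_single x).symm

lemma inner_delta_left (x : Xzd) (f : l2X) : ⟪δ x, f⟫_ℂ = f x := by
  rw [← deltaBasis_apply, ← deltaBasis.repr_apply_apply]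
  rfl

lemma inner_delta_deltaInt (x : Xzd) (k : ℤ) :
    ⟪δ x, deltaInt k⟫_ℂ = if (x : ℤ) = k then 1 else 0 := by
  rw [inner_delta_left, deltaInt_apply]

lemma inner_delta_delta (x y : Xzd) : ⟪δ x, δ y⟫_ℂ = if (x : ℤ) = y then 1 else 0 := by
  rw [← deltaInt_coe y, inner_delta_deltaInt]

lemma inner_deltaInt_delta (k : ℤ) (x : Xzd) :
    ⟪deltaInt k, δ x⟫_ℂ = if (x : ℤ) = k then 1 else 0 := by
  rw [← inner_conj_symm, inner_delta_deltaInt]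
  split_ifs <;> simp

def IsPartialTranslation (s : ℤ → l2X →L[ℂ] l2X) : Prop :=
  ∀ (n : ℤ) (x : Xzd), s n (δ x) = deltaInt (x + n)

namespace IsPartialTranslation

variable {s : ℤ → l2X →L[ℂ] l2X}

lemma of_cases (hs : ∀ (n : ℤ) (x : Xzd),
      (∀ h : (x : ℤ) + n ∈ Xzd, s n (δ x) = δ ⟨(x : ℤ) + n, h⟩) ∧
      ((x : ℤ) + n ∉ Xzd → s n (δ x) = 0)) : IsPartialTranslation s := fun n x => by
  by_cases h : (x : ℤ) + n ∈ Xzd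
  · rw [(hs n x).1 h, deltaInt, dif_pos h]
  · rw [(hs n x).2 h, deltaInt, dif_neg h]

lemma adjoint_eq (hs : IsPartialTranslation s) (n : ℤ) : adjoint (s n) = s (-n) := by
  refine (deltaBasis.eq_adjoint_of_inner fun x y => ?_).symm
  rw [deltaBasis_apply, deltaBasis_apply, hs, hs, inner_delta_deltaInt, inner_deltaInt_delta]
  exact if_congr (by omega) rfl rfl

lemma apply_deltaInt (hs : IsPartialTranslation s) (n : ℤ) {k : ℤ} (hk : k ∈ Xzd) :
    s n (deltaInt k) = deltaInt (k + n) := by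
  rw [deltaInt, dif_pos hk, hs]

lemma mul_adjoint_one (hs : IsPartialTranslation s) :
    s 1 * adjoint (s 1) = 1 - rankOne ℂ (δ ⟨1, one_ne_zero⟩) (δ ⟨1, one_ne_zero⟩) := by
  rw [hs.adjoint_eq]
  refine deltaBasis.continuousLinearMap_ext fun x => ?_
  rw [deltaBasis_apply, mul_def, comp_apply, hs, sub_apply, one_apply_eq_self,
    rankOne_apply, inner_delta_delta]
  rcases eq_or_ne (x : ℤ) 1 with hx | hx
  · obtain rfl : x = ⟨1, one_ne_zero⟩ := Subtype.ext hx
    simp [deltaInt_zero]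
  · rw [hs.apply_deltaInt _ (show (x : ℤ) + -1 ≠ 0 by omega), neg_add_cancel_right, deltaInt_coe,
      if_neg (Ne.symm hx), zero_smul, sub_zero]

lemma rankOne_delta_eq (hs : IsPartialTranslation s) (x y : Xzd) :
    rankOne ℂ (δ x) (δ y) = s (x - 1) * (1 - s 1 * adjoint (s 1)) * s (1 - y) := by
  rw [hs.mul_adjoint_one, sub_sub_cancel, mul_def, mul_def, comp_rankOne, rankOne_comp,
    hs.adjoint_eq, hs, hs, add_sub_cancel, neg_sub, add_sub_cancel, deltaInt_coe, deltaInt_coe]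

end IsPartialTranslation

open ContinuousLinearMap in
/-- For `X = ℤ∖{0}` and the family of partial translation operators `sₙ` on `ℓ²(X)`
(determined by `sₙ δₓ = δ_{x+n}` if `x + n ∈ X` and `sₙ δₓ = 0` otherwise):
`s₁ s₁* = 1 − p₁` where `p₁` is the rank-one orthogonal projection onto the span of
`δ₁`, and the C*-subalgebra of `B(ℓ²(X))` generated by the family `{sₙ : n ∈ ℤ}`
contains every compact operator on `ℓ²(X)`. -/
theorem stmt3 (s : ℤ → (l2X →L[ℂ] l2X))
    (hs : ∀ (n : ℤ) (x : Xzd),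
      (∀ h : (x : ℤ) + n ∈ Xzd, s n (δ x) = δ ⟨(x : ℤ) + n, h⟩) ∧
      ((x : ℤ) + n ∉ Xzd → s n (δ x) = 0)) :
    s 1 * adjoint (s 1) = 1 - (innerSL ℂ (δ ⟨1, one_ne_zero⟩)).smulRight (δ ⟨1, one_ne_zero⟩) ∧
    ∀ K : l2X →L[ℂ] l2X, IsCompactOperator K →
      K ∈ (StarAlgebra.adjoin ℂ (Set.range s)).topologicalClosure := by
  have hs := IsPartialTranslation.of_cases hs
  refine ⟨hs.mul_adjoint_one, fun K hK => ?_⟩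
  set A := StarAlgebra.adjoin ℂ (Set.range s)
  have hgen (n : ℤ) : s n ∈ A := StarAlgebra.subset_adjoin ℂ _ ⟨n, rfl⟩
  have hunit (x y : Xzd) : rankOne ℂ (δ x) (δ y) ∈ A := by
    rw [hs.rankOne_delta_eq, ← star_eq_adjoint]
    exact mul_mem (mul_mem (hgen _) (sub_mem (one_mem _) (mul_mem (hgen 1) (star_mem (hgen 1)))))
      (hgen _)
  refine deltaBasis.mem_of_isCompactOperator (M := A.topologicalClosure.toSubalgebra.toSubmodule)
    A.isClosed_topologicalClosure (fun x y => ?_) hK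
  rw [deltaBasis_apply, deltaBasis_apply]
  exact A.le_topologicalClosure (hunit x y)
end
end

section
/- Let X = ℤ∖{0} and let t be the bounded operator on ℓ²(X) determined by t(δⱼ) = δ_{j+1} for j ∈ X with j ≠ −1, and t(δ_{−1}) = δ₁. Then: (1) t is a unitary operator; (2) for every n ∈ ℤ, the operator tⁿ − sₙ on ℓ²(X) is compact; and (3) if U : ℓ²(X) → ℓ²(ℤ) is the unitary induced by the bijection φ : X → ℤ with φ(j) = j for j > 0 and φ(j) = j + 1 for j < 0 (so U(δⱼ) = δ_{φ(j)}), then U t U* is the bilateral shift on ℓ²(ℤ). -/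
/-! `t` is the operator of the permutation `succX` of `X` obtained by transporting `n ↦ n + 1`
along the bijection `φ : X → ℤ`; hence `t` is unitary and `U t U*` is the bilateral shift.
Since `φ (succXᵐ x) = φ x + m`, the permutation `succXᵐ` agrees with `x ↦ x + m` except at the
finitely many `x` with `|x| ≤ |m|`, so `tᵐ - sₘ` kills all but finitely many basis vectors and
therefore has finite rank. -/

/- ℓ²(X) for X = ℤ∖{0} and ℓ²(ℤ), with their standard orthonormal bases. -/
noncomputable section

abbrev l2Z : Type := lp (fun _ : ℤ => ℂ) 2

/-- The standard basis vector δₙ of ℓ²(ℤ). -/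
def δZ (n : ℤ) : l2Z := lp.single 2 n 1

/-- The bijective coarse equivalence `φ : X → ℤ`, `φ(j) = j` for `j > 0` and
`φ(j) = j + 1` for `j < 0`. -/
def φ (j : Xzd) : ℤ := if 0 < (j : ℤ) then (j : ℤ) else (j : ℤ) + 1

open ContinuousLinearMap

namespace lp

variable {𝕜 ι : Type*} [RCLike 𝕜] [DecidableEq ι] {p : ENNReal} [Fact (1 ≤ p)]

theorem ext_single_one (hp : p ≠ ⊤) {F : Type*} [AddCommMonoid F] [Module 𝕜 F]
    [TopologicalSpace F] [T2Space F] {A B : lp (fun _ : ι => 𝕜) p →L[𝕜] F}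
    (h : ∀ i, A (lp.single p i 1) = B (lp.single p i 1)) : A = B :=
  lp.ext_continuousLinearMap hp fun i => ext_ring (h i)

theorem isCompactOperator_of_apply_single_eq_zero (hp : p ≠ ⊤) {E : Type*}
    [NormedAddCommGroup E] [NormedSpace 𝕜 E] {A : lp (fun _ : ι => 𝕜) p →L[𝕜] E}
    (s : Finset ι) (h : ∀ i ∉ s, A (lp.single p i 1) = 0) : IsCompactOperator A := by
  have hA : A = ∑ i ∈ s,
      (lp.evalCLM 𝕜 (fun _ : ι => 𝕜) p i).smulRight (A (lp.single p i 1)) := by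
    refine ext_single_one hp fun j => ?_
    simpa [sum_apply, lp.evalCLM, lp.single_apply, Pi.single_apply] using h j
  rw [hA]
  refine (compactOperator (RingHom.id 𝕜) _ E).sum_mem fun i _ => ?_
  -- a rank-one operator factors through the locally compact space `𝕜`
  exact (isCompactOperator_of_locallyCompactSpace_dom _).continuous_comp
    (continuous_id.smul continuous_const)

theorem pow_apply_single_of_apply_single
    {T : lp (fun _ : ι => 𝕜) p →L[𝕜] lp (fun _ : ι => 𝕜) p} {e : Equiv.Perm ι}
    (hT : ∀ i, T (lp.single p i 1) = lp.single p (e i) 1) (n : ℕ) (i : ι) :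
    (T ^ n) (lp.single p i 1) = lp.single p ((e ^ n) i) 1 := by
  induction n with
  | zero => rfl
  | succ n ih => rw [pow_succ', mul_apply_eq_comp, ih, hT, pow_succ', Equiv.Perm.mul_apply]

section Permutation

variable {T : lp (fun _ : ι => 𝕜) 2 →L[𝕜] lp (fun _ : ι => 𝕜) 2} {e : Equiv.Perm ι}

theorem adjoint_apply_single_of_apply_single
    (hT : ∀ i, T (lp.single 2 i 1) = lp.single 2 (e i) 1) (i : ι) :
    adjoint T (lp.single 2 i 1) = lp.single 2 (e.symm i) 1 := by
  ext j
  have coord : ∀ v : lp (fun _ : ι => 𝕜) 2, v j = inner 𝕜 (lp.single 2 j (1 : 𝕜)) v := by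
    simp [lp.inner_single_left]
  rw [coord, adjoint_inner_right, hT, lp.inner_single_left]
  simp [lp.single_apply, Pi.single_apply, Equiv.eq_symm_apply]

theorem mem_unitary_of_apply_single
    (hT : ∀ i, T (lp.single 2 i 1) = lp.single 2 (e i) 1) : T ∈ unitary _ := by
  rw [Unitary.mem_iff, star_eq_adjoint]
  constructor <;> refine ext_single_one ENNReal.ofNat_ne_top fun i => ?_
  · rw [mul_apply_eq_comp, hT, adjoint_apply_single_of_apply_single hT, Equiv.symm_apply_apply,
      one_apply_eq_self]
  · rw [mul_apply_eq_comp, adjoint_apply_single_of_apply_single hT, hT, Equiv.apply_symm_apply,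
      one_apply_eq_self]

end Permutation

end lp

theorem Equiv.Perm.zpow_apply_of_map_apply_eq_add {α G : Type*} [AddCommGroup G]
    {e : Equiv.Perm α} {f : α → G} {c : G} (hf : ∀ x, f (e x) = f x + c) (m : ℤ) (x : α) :
    f ((e ^ m) x) = f x + m • c := by
  induction m using Int.induction_on generalizing x with
  | zero => simp
  | succ m ih =>
    rw [zpow_add_one, Equiv.Perm.mul_apply, ih, hf, add_zsmul, one_zsmul]
    abel
  | pred m ih =>
    have hinv : f (e⁻¹ x) = f x - c := by
      rw [eq_sub_iff_add_eq, ← hf, Equiv.Perm.inv_def, Equiv.apply_symm_apply]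
    rw [zpow_sub_one, Equiv.Perm.mul_apply, ih, hinv, sub_zsmul, one_zsmul]
    abel

def φEquiv : Xzd ≃ ℤ where
  toFun := φ
  invFun n := if h : 0 < n then ⟨n, h.ne'⟩ else ⟨n - 1, by grind⟩
  left_inv := by
    rintro ⟨j, hj : j ≠ 0⟩
    unfold φ
    split_ifs <;> grind
  right_inv n := by
    unfold φ
    split_ifs <;> grind

def succX : Equiv.Perm Xzd := φEquiv.trans ((Equiv.addRight 1).trans φEquiv.symm)

theorem φ_succX (x : Xzd) : φ (succX x) = φ x + 1 :=
  φEquiv.apply_symm_apply (φ x + 1)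

theorem φ_succX_zpow (m : ℤ) (x : Xzd) : φ ((succX ^ m) x) = φ x + m := by
  simpa using Equiv.Perm.zpow_apply_of_map_apply_eq_add φ_succX m x

theorem coe_succX (j : Xzd) : (succX j : ℤ) = if (j : ℤ) = -1 then 1 else (j : ℤ) + 1 := by
  obtain ⟨j, hj : j ≠ 0⟩ := j
  simp only [succX, φEquiv, φ, Equiv.trans_apply, Equiv.coe_fn_mk, Equiv.coe_fn_symm_mk,
    Equiv.coe_addRight]
  split_ifs <;> grind

theorem coe_succX_zpow_of_abs_lt {m : ℤ} {x : Xzd} (hx : |m| < |(x : ℤ)|) :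
    (x : ℤ) + m ≠ 0 ∧ ((succX ^ m) x : ℤ) = (x : ℤ) + m := by
  have hxm : (x : ℤ) + m ≠ 0 := by grind
  refine ⟨hxm, congrArg Subtype.val (φEquiv.injective (?_ : φ _ = φ ⟨x + m, hxm⟩))⟩
  rw [φ_succX_zpow]
  unfold φ
  split_ifs <;> grind

theorem isCompactOperator_sub_of_apply_δ_eq_succX_zpow {A S : l2X →L[ℂ] l2X} {m : ℤ}
    (hA : ∀ x, A (δ x) = δ ((succX ^ m) x))
    (hS : ∀ (x : Xzd) (h : (x : ℤ) + m ∈ Xzd), S (δ x) = δ ⟨x + m, h⟩) :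
    IsCompactOperator (A - S) := by
  refine lp.isCompactOperator_of_apply_single_eq_zero ENNReal.ofNat_ne_top
    ((Finset.Icc (-|m|) |m|).subtype (· ∈ Xzd)) fun x hx => ?_
  have hx : |m| < |(x : ℤ)| := by
    rw [Finset.mem_subtype, Finset.mem_Icc, ← abs_le] at hx
    exact not_le.mp hx
  obtain ⟨hxm, hcoe⟩ := coe_succX_zpow_of_abs_lt hx
  change A (δ x) - S (δ x) = 0
  rw [hA, hS x hxm, sub_eq_zero, show (succX ^ m) x = ⟨_, hxm⟩ from Subtype.ext hcoe]

open ContinuousLinearMap in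
/-- Let `X = ℤ∖{0}` and let `t` be the operator on `ℓ²(X)` with `t δⱼ = δ_{j+1}` for
`j ≠ −1` and `t δ₋₁ = δ₁`.  Then (1) `t` is unitary; (2) `tⁿ − sₙ` is compact for every
`n ∈ ℤ` (for negative exponents `tⁿ = (t*)^{−n}`); and (3) conjugating `t` by the
unitary `U : ℓ²(X) → ℓ²(ℤ)` induced by `φ` yields the bilateral shift on `ℓ²(ℤ)`. -/
theorem stmt5 (s : ℤ → (l2X →L[ℂ] l2X))
    (hs : ∀ (n : ℤ) (x : Xzd),
      (∀ h : (x : ℤ) + n ∈ Xzd, s n (δ x) = δ ⟨(x : ℤ) + n, h⟩) ∧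
      ((x : ℤ) + n ∉ Xzd → s n (δ x) = 0))
    (t : l2X →L[ℂ] l2X)
    (ht : ∀ (j : Xzd) (h : (j : ℤ) + 1 ∈ Xzd), (j : ℤ) ≠ -1 → t (δ j) = δ ⟨(j : ℤ) + 1, h⟩)
    (ht' : t (δ ⟨-1, by norm_num⟩) = δ ⟨1, one_ne_zero⟩)
    (U : l2X →L[ℂ] l2Z) (hU : ∀ x : Xzd, U (δ x) = δZ (φ x))
    (hUl : adjoint U ∘L U = (1 : l2X →L[ℂ] l2X))
    (B : l2Z →L[ℂ] l2Z) (hB : ∀ n : ℤ, B (δZ n) = δZ (n + 1)) :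
    t ∈ unitary (l2X →L[ℂ] l2X) ∧
    (∀ n : ℕ, IsCompactOperator ((t ^ n - s n : l2X →L[ℂ] l2X) : l2X → l2X) ∧
      IsCompactOperator (((star t) ^ n - s (-(n : ℤ)) : l2X →L[ℂ] l2X) : l2X → l2X)) ∧
    U ∘L t ∘L adjoint U = B := by
  have ht_succX : ∀ j, t (δ j) = δ (succX j) := by
    intro j
    by_cases hj : (j : ℤ) = -1
    · obtain rfl : j = ⟨-1, by norm_num⟩ := Subtype.ext hj
      rw [ht', show succX ⟨-1, _⟩ = ⟨1, one_ne_zero⟩ from Subtype.ext (by simp [coe_succX])]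
    · rw [ht j (by grind) hj,
        show succX j = ⟨_, _⟩ from Subtype.ext ((coe_succX j).trans (if_neg hj))]
  have hstar : ∀ j, star t (δ j) = δ (succX⁻¹ j) :=
    lp.adjoint_apply_single_of_apply_single ht_succX
  have hU_adj : ∀ n, adjoint U (δZ n) = δ (φEquiv.symm n) := fun n => by
    simpa [hU, show φ (φEquiv.symm n) = n from φEquiv.apply_symm_apply n]
      using congr($hUl (δ (φEquiv.symm n)))
  refine ⟨lp.mem_unitary_of_apply_single ht_succX, fun n => ⟨?_, ?_⟩, ?_⟩
  · refine isCompactOperator_sub_of_apply_δ_eq_succX_zpow (m := n) (fun x => ?_) (hs n · |>.1)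
    rw [zpow_natCast]
    exact lp.pow_apply_single_of_apply_single ht_succX n x
  · refine isCompactOperator_sub_of_apply_δ_eq_succX_zpow (fun x => ?_) (hs (-n) · |>.1)
    rw [zpow_neg, zpow_natCast, ← inv_pow]
    exact lp.pow_apply_single_of_apply_single hstar n x
  · refine lp.ext_single_one ENNReal.ofNat_ne_top fun n => ?_
    change U (t (adjoint U (δZ n))) = B (δZ n)
    rw [hU_adj, ht_succX, hU, hB, φ_succX]
    exact congrArg (δZ <| · + 1) (φEquiv.apply_symm_apply n)
end
end
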